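/- Any two finitely branching trees with ω levels encoded by the same template are locally isomorphic: for every n, the unions of their first n levels are order-isomorphic. -/

import Mathlib

/-- A well-founded tree order of height at most ω: a partial order with a least
element (root) in which the set of predecessors of every element is finite and
linearly ordered. -/
structure TreeOrder (T : Type*) where
  le : T → T → Prop
  refl : ∀ x, le x x
  antisymm : ∀ x y, le x y → le y x → x = y
  trans : ∀ x y z, le x y → le y z → le x z
  root : T
  root_le : ∀ x, le root x
  pred_finite : ∀ x, {y | le y x}.Finite
  pred_chain : ∀ x y z, le y x → le z x → le y z ∨ le z y

namespace TreeOrder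

variable {T : Type*} (t : TreeOrder T)

/-- The strict order associated to a tree order. -/
def lt (x y : T) : Prop := t.le x y ∧ x ≠ y

/-- The `n`-th level: elements with exactly `n` strict predecessors. -/
def level (n : ℕ) : Set T := {x | {y | t.lt y x}.ncard = n}

/-- The tree has ω levels: every level is nonempty. -/
def OmegaLevels : Prop := ∀ n, (t.level n).Nonempty

/-- All levels are finite. -/
def FiniteLevels : Prop := ∀ n, (t.level n).Finite

/-- No leaves: every element has a strict successor. -/
def NoLeaves : Prop := ∀ x, ∃ y, t.lt x y

/-- `y` is an immediate successor of `x`. -/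
def ImmSucc (x y : T) : Prop := t.lt x y ∧ ¬ ∃ z, t.lt x z ∧ t.lt z y

/-- Union of the first `n` levels. -/
def below (n : ℕ) : Set T := {x | ∃ k < n, x ∈ t.level k}

end TreeOrder


/-- A template: a tree with ω levels, all finite (hence finitely branching),
together with a linear order on the immediate successors of each node and a
positive integer label on each edge. -/
structure Template (A : Type*) where
  t : TreeOrder A
  omega : t.OmegaLevels
  finlev : t.FiniteLevels
  label : A → A → ℕ
  label_pos : ∀ X Y, t.ImmSucc X Y → 0 < label X Y
  sOrd : A → A → A → Prop
  sOrd_trans : ∀ X Y Z W, t.ImmSucc X Y → t.ImmSucc X Z → t.ImmSucc X W →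
    sOrd X Y Z → sOrd X Z W → sOrd X Y W
  sOrd_antisymm : ∀ X Y Z, t.ImmSucc X Y → t.ImmSucc X Z →
    sOrd X Y Z → sOrd X Z Y → Y = Z
  sOrd_total : ∀ X Y Z, t.ImmSucc X Y → t.ImmSucc X Z → sOrd X Y Z ∨ sOrd X Z Y

/-- A tree `t` (with ω levels, all finite) is encoded by the template `τ` via
pieces `E X`: the pieces corresponding to the n-th level of the template
partition the n-th level of the tree, every element of the piece `E X` has
exactly `label X Y` immediate successors in the piece `E Y` for every
≺-immediate successor `Y` of `X`, and no other immediate successors. -/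
def Encodes {A T : Type*} (τ : Template A) (t : TreeOrder T) (E : A → Set T) : Prop :=
  t.OmegaLevels ∧ t.FiniteLevels ∧
  (∀ n, ∀ X ∈ τ.t.level n, (E X).Nonempty ∧ E X ⊆ t.level n) ∧
  (∀ n, ∀ x ∈ t.level n, ∃! X, X ∈ τ.t.level n ∧ x ∈ E X) ∧
  (∀ X Y, τ.t.ImmSucc X Y → ∀ x ∈ E X, {y | y ∈ E Y ∧ t.ImmSucc x y}.ncard = τ.label X Y) ∧
  (∀ x y : T, t.ImmSucc x y → ∃ X Y, τ.t.ImmSucc X Y ∧ x ∈ E X ∧ y ∈ E Y)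

/-!
Isomorphisms of the first `n` levels are built level by level, keeping them piece-preserving.
If `f` matches the first `k + 1` levels and sends a node `x` to a node of the same piece `X`,
then for every template successor `Y` of `X` both `x` and `f x` have exactly `n(X, Y)` children
in the pieces `Y`, and no children elsewhere; so the children of `x` can be mapped onto those of
`f x` piece by piece. A bijection between initial parts that maps the children of each node onto
the children of its image is an order-isomorphism, because `x ≤ y` holds exactly when `x = y` or
`x` lies below the parent of `y`.
-/

open Set

namespace TreeOrder

section

variable {T : Type*} (t : TreeOrder T)

noncomputable def lev (x : T) : ℕ := {y | t.lt y x}.ncard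

def children (x : T) : Set T := {y | t.ImmSucc x y}

open Classical in
/-- The immediate predecessor of `x`; junk value `x` at the root. -/
noncomputable def parent (x : T) : T := if h : ∃ p, t.ImmSucc p x then h.choose else x

end

section

variable {T : Type*} {t : TreeOrder T} {x y z p q : T} {n : ℕ}

lemma mem_level : x ∈ t.level n ↔ t.lev x = n := Iff.rfl

lemma mem_below : x ∈ t.below n ↔ t.lev x < n :=
  ⟨fun ⟨_, hk, hx⟩ => mem_level.1 hx ▸ hk, fun h => ⟨_, h, rfl⟩⟩

lemma mem_below_succ : x ∈ t.below (n + 1) ↔ x ∈ t.below n ∨ x ∈ t.level n := by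
  rw [mem_below, mem_below, mem_level]
  omega

lemma lt_of_lt_of_le (h : t.lt x y) (h' : t.le y z) : t.lt x z :=
  ⟨t.trans _ _ _ h.1 h', by rintro rfl; exact h.2 (t.antisymm _ _ h.1 h')⟩

lemma finite_setOf_lt (x : T) : {y | t.lt y x}.Finite :=
  (t.pred_finite x).subset fun _ hy => hy.1

lemma lev_lt_lev (h : t.lt x y) : t.lev x < t.lev y :=
  ncard_lt_ncard (ssubset_iff_of_subset (fun _ hz => lt_of_lt_of_le hz h.1) |>.2
    ⟨x, h, fun h' => h'.2 rfl⟩) (finite_setOf_lt y)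

lemma lev_le_lev (h : t.le x y) : t.lev x ≤ t.lev y := by
  rcases eq_or_ne x y with rfl | hxy
  · exact le_rfl
  · exact (lev_lt_lev ⟨h, hxy⟩).le

lemma eq_of_le_of_lev_le (h : t.le x y) (hl : t.lev y ≤ t.lev x) : x = y :=
  by_contra fun hxy => (lev_lt_lev ⟨h, hxy⟩).not_ge hl

lemma le_iff_of_immSucc (h : t.ImmSucc p y) : t.le x y ↔ x = y ∨ t.le x p := by
  refine ⟨fun hxy => or_iff_not_imp_left.2 fun hne => ?_, ?_⟩
  · rcases t.pred_chain y x p hxy h.1.1 with hxp | hpx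
    · exact hxp
    · rcases eq_or_ne p x with rfl | hpx'
      · exact t.refl _
      · exact absurd ⟨x, ⟨hpx, hpx'⟩, hxy, hne⟩ h.2
  · rintro (rfl | hxp)
    · exact t.refl _
    · exact t.trans _ _ _ hxp h.1.1

lemma lt_iff_le_of_immSucc (h : t.ImmSucc p y) : t.lt x y ↔ t.le x p := by
  rw [lt, le_iff_of_immSucc h]
  refine ⟨fun ⟨hx, hne⟩ => hx.resolve_left hne, fun hxp => ⟨Or.inr hxp, ?_⟩⟩
  rintro rfl
  exact h.1.2 (t.antisymm _ _ h.1.1 hxp)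

lemma lev_of_immSucc (h : t.ImmSucc p y) : t.lev y = t.lev p + 1 := by
  have hpred : {z | t.lt z y} = insert p {z | t.lt z p} := by
    ext z
    rw [mem_ofPred_eq, lt_iff_le_of_immSucc h, mem_insert_iff, mem_ofPred_eq, lt]
    rcases eq_or_ne z p with rfl | hne
    · simp [t.refl]
    · simp [hne]
  rw [lev, hpred, ncard_insert_of_notMem (fun hp => hp.2 rfl) (finite_setOf_lt p), lev]

lemma eq_of_immSucc (hp : t.ImmSucc p x) (hq : t.ImmSucc q x) : p = q :=
  t.antisymm _ _ ((lt_iff_le_of_immSucc hq).1 hp.1) ((lt_iff_le_of_immSucc hp).1 hq.1)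

lemma lev_eq_zero : t.lev x = 0 ↔ x = t.root := by
  refine ⟨fun h => by_contra fun hx => ?_, ?_⟩
  · have := lev_lt_lev (t := t) ⟨t.root_le x, Ne.symm hx⟩
    omega
  · rintro rfl
    refine (ncard_eq_zero (finite_setOf_lt _)).2 (eq_empty_of_forall_notMem fun z hz => hz.2 ?_)
    exact t.antisymm _ _ hz.1 (t.root_le z)

lemma below_zero : t.below 0 = ∅ :=
  eq_empty_of_forall_notMem fun _ hx => Nat.not_lt_zero _ (mem_below.1 hx)

lemma below_one : t.below 1 = {t.root} :=
  ext fun _ => by rw [mem_below, Nat.lt_one_iff, lev_eq_zero, mem_singleton_iff]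

/-- A maximal strict predecessor is an immediate one, as the strict predecessors form a chain. -/
lemma exists_immSucc_of_lev_pos (hx : 0 < t.lev x) : ∃ p, t.ImmSucc p x := by
  obtain ⟨p, hp, hmax⟩ := (finite_setOf_lt x).exists_maximalFor t.lev _
    (nonempty_of_ncard_ne_zero hx.ne')
  refine ⟨p, hp, fun ⟨z, hpz, hzx⟩ => hpz.2 ?_⟩
  rcases t.pred_chain x z p hzx.1 hp.1 with hzp | hpz'
  · exact t.antisymm _ _ hpz.1 hzp
  · exact eq_of_le_of_lev_le hpz' (hmax hzx (lev_le_lev hpz'))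

lemma immSucc_parent (hx : 0 < t.lev x) : t.ImmSucc (t.parent x) x := by
  have h := exists_immSucc_of_lev_pos hx
  rw [parent, dif_pos h]
  exact h.choose_spec

lemma parent_eq (h : t.ImmSucc p x) : t.parent x = p :=
  eq_of_immSucc (immSucc_parent (by rw [lev_of_immSucc h]; omega)) h

lemma parent_mem_level (hx : x ∈ t.level (n + 1)) : t.parent x ∈ t.level n := by
  have h := lev_of_immSucc (immSucc_parent (t := t) (x := x) (by rw [mem_level.1 hx]; omega))
  rw [mem_level] at hx ⊢
  omega

lemma mem_children_parent (hx : x ∈ t.level (n + 1)) : x ∈ t.children (t.parent x) :=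
  immSucc_parent (by rw [mem_level.1 hx]; omega)

lemma mem_level_of_mem_children (hx : p ∈ t.level n) (hy : y ∈ t.children p) :
    y ∈ t.level (n + 1) := by
  rw [mem_level, lev_of_immSucc hy, mem_level.1 hx]

end

variable {T₁ T₂ : Type*} {t1 : TreeOrder T₁} {t2 : TreeOrder T₂} {f g : T₁ → T₂} {x y : T₁}
  {k n : ℕ}

section

variable (t1 t2)

def IsIsoBelow (n : ℕ) (f : T₁ → T₂) : Prop :=
  BijOn f (t1.below n) (t2.below n) ∧
    ∀ x ∈ t1.below n, ∀ y ∈ t1.below n, (t1.le x y ↔ t2.le (f x) (f y))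

def BijOnChildren (k : ℕ) (f : T₁ → T₂) : Prop :=
  ∀ x ∈ t1.level k, BijOn f (t1.children x) (t2.children (f x))

end

lemma isIsoBelow_zero (f : T₁ → T₂) : IsIsoBelow t1 t2 0 f := by
  simp [IsIsoBelow, below_zero]

lemma isIsoBelow_one (hf : f t1.root = t2.root) : IsIsoBelow t1 t2 1 f := by
  simp [IsIsoBelow, below_one, hf, t1.refl, t2.refl]

lemma IsIsoBelow.congr (hf : IsIsoBelow t1 t2 n f) (h : EqOn f g (t1.below n)) :
    IsIsoBelow t1 t2 n g :=
  ⟨hf.1.congr h, fun x hx y hy => h hx ▸ h hy ▸ hf.2 x hx y hy⟩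

lemma IsIsoBelow.lt_iff (hf : IsIsoBelow t1 t2 n f) (hx : x ∈ t1.below n) (hy : y ∈ t1.below n) :
    t1.lt x y ↔ t2.lt (f x) (f y) :=
  and_congr (hf.2 x hx y hy) (not_congr (hf.1.injOn.eq_iff hx hy).symm)

/-- `f` maps the strict predecessors of `x` onto those of `f x`. -/
lemma IsIsoBelow.lev_map (hf : IsIsoBelow t1 t2 n f) (hx : x ∈ t1.below n) :
    t2.lev (f x) = t1.lev x := by
  have hsub : {w | t1.lt w x} ⊆ t1.below n := fun w hw =>
    mem_below.2 ((lev_lt_lev hw).trans (mem_below.1 hx))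
  have himage : f '' {w | t1.lt w x} = {w | t2.lt w (f x)} := by
    refine Subset.antisymm (image_subset_iff.2 fun w hw => (hf.lt_iff (hsub hw) hx).1 hw)
      fun w' hw' => ?_
    obtain ⟨w, hw, rfl⟩ := hf.1.surjOn (mem_below.2 ((lev_lt_lev hw').trans
      (mem_below.1 (hf.1.mapsTo hx))))
    exact ⟨w, (hf.lt_iff hw hx).2 hw', rfl⟩
  rw [lev, ← himage, (hf.1.injOn.mono hsub).ncard_image, lev]

lemma BijOnChildren.immSucc_map_parent (hch : BijOnChildren t1 t2 k f)
    (hy : y ∈ t1.level (k + 1)) : t2.ImmSucc (f (t1.parent y)) (f y) :=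
  (hch _ (parent_mem_level hy)).mapsTo (mem_children_parent hy)

lemma IsIsoBelow.lev_map_succ (hf : IsIsoBelow t1 t2 (k + 1) f) (hch : BijOnChildren t1 t2 k f)
    (hy : y ∈ t1.below (k + 2)) : t2.lev (f y) = t1.lev y := by
  rcases mem_below_succ.1 hy with hy | hy
  · exact hf.lev_map hy
  · rw [lev_of_immSucc (hch.immSucc_map_parent hy),
      hf.lev_map (mem_below_succ.2 (Or.inr (parent_mem_level hy))), mem_level.1 hy,
      mem_level.1 (parent_mem_level hy)]

lemma IsIsoBelow.injOn_succ (hf : IsIsoBelow t1 t2 (k + 1) f) (hch : BijOnChildren t1 t2 k f) :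
    InjOn f (t1.below (k + 2)) := by
  intro y₁ hy₁ y₂ hy₂ he
  have hlev : t1.lev y₁ = t1.lev y₂ := by
    rw [← hf.lev_map_succ hch hy₁, ← hf.lev_map_succ hch hy₂, he]
  rcases mem_below_succ.1 hy₁ with hy₁ | hy₁
  · exact hf.1.injOn hy₁ (mem_below.2 (hlev ▸ mem_below.1 hy₁)) he
  have hy₂ : y₂ ∈ t1.level (k + 1) := mem_level.2 (hlev ▸ mem_level.1 hy₁)
  have hparent : t1.parent y₁ = t1.parent y₂ :=
    hf.1.injOn (mem_below_succ.2 (Or.inr (parent_mem_level hy₁)))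
      (mem_below_succ.2 (Or.inr (parent_mem_level hy₂)))
      (eq_of_immSucc (hch.immSucc_map_parent hy₁) (he ▸ hch.immSucc_map_parent hy₂))
  exact (hch _ (parent_mem_level hy₁)).injOn (mem_children_parent hy₁)
    (hparent ▸ mem_children_parent hy₂) he

lemma IsIsoBelow.surjOn_succ (hf : IsIsoBelow t1 t2 (k + 1) f) (hch : BijOnChildren t1 t2 k f) :
    SurjOn f (t1.below (k + 2)) (t2.below (k + 2)) := by
  intro z hz
  rcases mem_below_succ.1 hz with hz | hz
  · obtain ⟨y, hy, rfl⟩ := hf.1.surjOn hz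
    exact ⟨y, mem_below_succ.2 (Or.inl hy), rfl⟩
  obtain ⟨x, hx, hxz⟩ := hf.1.surjOn (mem_below_succ.2 (Or.inr (parent_mem_level hz)))
  have hxk : x ∈ t1.level k := by
    rw [mem_level, ← hf.lev_map hx, hxz, ← mem_level]
    exact parent_mem_level hz
  obtain ⟨y, hy, rfl⟩ := (hch x hxk).surjOn (show z ∈ t2.children (f x) from
    hxz ▸ mem_children_parent hz)
  exact ⟨y, mem_below_succ.2 (Or.inr (mem_level_of_mem_children hxk hy)), rfl⟩

lemma IsIsoBelow.le_iff_succ (hf : IsIsoBelow t1 t2 (k + 1) f) (hch : BijOnChildren t1 t2 k f)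
    (hx : x ∈ t1.below (k + 2)) (hy : y ∈ t1.below (k + 1)) :
    t1.le x y ↔ t2.le (f x) (f y) := by
  rcases mem_below_succ.1 hx with hx | hx
  · exact hf.2 x hx y hy
  have hxy : t1.lev y < t1.lev x := mem_level.1 hx ▸ mem_below.1 hy
  have hfxy : t2.lev (f y) < t2.lev (f x) := by
    rw [hf.lev_map hy, hf.lev_map_succ hch (mem_below_succ.2 (Or.inr hx))]
    exact hxy
  exact iff_of_false (fun h => (lev_le_lev h).not_gt hxy) (fun h => (lev_le_lev h).not_gt hfxy)

lemma IsIsoBelow.succ (hf : IsIsoBelow t1 t2 (k + 1) f) (hch : BijOnChildren t1 t2 k f) :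
    IsIsoBelow t1 t2 (k + 2) f := by
  refine ⟨⟨fun y hy => ?_, hf.injOn_succ hch, hf.surjOn_succ hch⟩, fun x hx y hy => ?_⟩
  · exact mem_below.2 (hf.lev_map_succ hch hy ▸ mem_below.1 hy)
  rcases mem_below_succ.1 hy with hy | hy
  · exact hf.le_iff_succ hch hx hy
  have hp := mem_below_succ.2 (Or.inr (parent_mem_level hy))
  rw [le_iff_of_immSucc (mem_children_parent hy), le_iff_of_immSucc (hch.immSucc_map_parent hy),
    (hf.injOn_succ hch).eq_iff hx (mem_below_succ.2 (Or.inr hy)), hf.le_iff_succ hch hx hp]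

end TreeOrder

lemma Set.exists_bijOn_of_ncard_fiber_eq {ι α β : Type*} [Nonempty β] {s : Set α} {t : Set β}
    (p : α → ι) (q : β → ι) (hs : s.Finite) (ht : t.Finite)
    (h : ∀ i, {a ∈ s | p a = i}.ncard = {b ∈ t | q b = i}.ncard) :
    ∃ f : α → β, BijOn f s t ∧ ∀ a ∈ s, q (f a) = p a := by
  have hfiber (i : ι) : ∃ F : α → β, BijOn F {a ∈ s | p a = i} {b ∈ t | q b = i} := by
    have hsi := hs.subset (sep_subset s (p · = i))
    refine hsi.exists_bijOn_of_encard_eq ?_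
    rw [← hsi.cast_ncard_eq, ← (ht.subset (sep_subset t (q · = i))).cast_ncard_eq, h]
  choose F hF using hfiber
  have hmaps {a : α} (ha : a ∈ s) : F (p a) a ∈ {b ∈ t | q b = p a} := (hF (p a)).mapsTo ⟨ha, rfl⟩
  refine ⟨fun a => F (p a) a, ⟨fun a ha => (hmaps ha).1, fun a ha a' ha' he => ?_, ?_⟩,
    fun a ha => (hmaps ha).2⟩
  · have hp : p a = p a' := by
      rw [← (hmaps ha).2, ← (hmaps ha').2]
      exact congrArg q he
    have he : F (p a) a = F (p a') a' := he
    rw [← hp] at he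
    exact (hF (p a)).injOn ⟨ha, rfl⟩ ⟨ha', hp.symm⟩ he
  · intro b hb
    obtain ⟨a, ⟨ha, hpa⟩, hab⟩ := (hF (q b)).surjOn ⟨hb, rfl⟩
    exact ⟨a, ha, show F (p a) a = b by rw [hpa, hab]⟩

namespace Encodes

open TreeOrder

variable {A T : Type*} {τ : Template A} {t : TreeOrder T} {E : A → Set T} {x y : T} {X : A}

lemma lev_eq_of_mem (h : Encodes τ t E) (hx : x ∈ E X) : t.lev x = τ.t.lev X :=
  (h.2.2.1 _ X rfl).2 hx

lemma exists_mem (h : Encodes τ t E) (x : T) : ∃ X, x ∈ E X :=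
  (h.2.2.2.1 _ x rfl).exists.imp fun _ hX => hX.2

noncomputable def piece (h : Encodes τ t E) (x : T) : A := (h.exists_mem x).choose

lemma mem_piece (h : Encodes τ t E) (x : T) : x ∈ E (h.piece x) :=
  (h.exists_mem x).choose_spec

lemma piece_eq_iff (h : Encodes τ t E) : h.piece x = X ↔ x ∈ E X := by
  refine ⟨fun hX => hX ▸ h.mem_piece x, fun hx => ?_⟩
  have hlev {Z : A} (hz : x ∈ E Z) : Z ∈ τ.t.level (t.lev x) := (h.lev_eq_of_mem hz).symm
  exact (h.2.2.2.1 _ x rfl).unique ⟨hlev (h.mem_piece x), h.mem_piece x⟩ ⟨hlev hx, hx⟩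

lemma piece_root (h : Encodes τ t E) : h.piece t.root = τ.t.root := by
  rw [← lev_eq_zero, ← h.lev_eq_of_mem (h.mem_piece _), lev_eq_zero]

lemma immSucc_piece (h : Encodes τ t E) (hxy : t.ImmSucc x y) :
    τ.t.ImmSucc (h.piece x) (h.piece y) := by
  obtain ⟨X, Y, hXY, hx, hy⟩ := h.2.2.2.2.2 x y hxy
  rwa [h.piece_eq_iff.2 hx, h.piece_eq_iff.2 hy]

lemma finite_children (h : Encodes τ t E) (x : T) : (t.children x).Finite :=
  (h.2.1 (t.lev x + 1)).subset fun _ hy => lev_of_immSucc hy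

open Classical in
/-- A child's piece is always a template successor of the piece of `x`. -/
lemma ncard_children_piece_eq (h : Encodes τ t E) (x : T) (Y : A) :
    {y ∈ t.children x | h.piece y = Y}.ncard =
      if τ.t.ImmSucc (h.piece x) Y then τ.label (h.piece x) Y else 0 := by
  split_ifs with hY
  · rw [← h.2.2.2.2.1 _ Y hY x (h.mem_piece x)]
    congr 1
    ext y
    rw [mem_sep_iff, h.piece_eq_iff, mem_ofPred_eq, and_comm]
    rfl
  · refine (ncard_eq_zero (h.finite_children x |>.subset (sep_subset _ _))).2 ?_
    exact eq_empty_of_forall_notMem fun y ⟨hy, hyY⟩ => hY (hyY ▸ h.immSucc_piece hy)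

variable {T₂ : Type*} {t2 : TreeOrder T₂} {E2 : A → Set T₂} {x₂ : T₂}

lemma exists_bijOn_children (h : Encodes τ t E) (h2 : Encodes τ t2 E2)
    (hx : h2.piece x₂ = h.piece x) :
    ∃ φ : T → T₂, BijOn φ (t.children x) (t2.children x₂) ∧
      ∀ y ∈ t.children x, h2.piece (φ y) = h.piece y := by
  have : Nonempty T₂ := ⟨t2.root⟩
  refine exists_bijOn_of_ncard_fiber_eq _ _ (h.finite_children x) (h2.finite_children x₂)
    fun Y => ?_
  rw [h.ncard_children_piece_eq, h2.ncard_children_piece_eq, hx]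

lemma exists_isIsoBelow (h : Encodes τ t E) (h2 : Encodes τ t2 E2) (k : ℕ) :
    ∃ f : T → T₂, IsIsoBelow t t2 (k + 1) f ∧
      ∀ x ∈ t.below (k + 1), h2.piece (f x) = h.piece x := by
  induction k with
  | zero =>
    refine ⟨fun _ => t2.root, isIsoBelow_one rfl, fun x hx => ?_⟩
    rw [below_one, mem_singleton_iff] at hx
    rw [hx, h.piece_root, h2.piece_root]
  | succ k ih =>
    obtain ⟨f, hf, hfpiece⟩ := ih
    have hφ : ∀ x ∈ t.level k, ∃ φ : T → T₂, BijOn φ (t.children x) (t2.children (f x)) ∧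
        ∀ y ∈ t.children x, h2.piece (φ y) = h.piece y := fun x hx =>
      h.exists_bijOn_children h2 (hfpiece x (mem_below_succ.2 (Or.inr hx)))
    have : Nonempty T₂ := ⟨t2.root⟩
    choose! φ hφ using hφ
    set g : T → T₂ := fun y => if t.lev y ≤ k then f y else φ (t.parent y) y
    have hgf : EqOn g f (t.below (k + 1)) := fun y hy =>
      if_pos (Nat.lt_succ_iff.1 (mem_below.1 hy))
    have hgφ {x y : T} (hx : x ∈ t.level k) (hy : y ∈ t.children x) : g y = φ x y := by
      rw [show g y = φ (t.parent y) y from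
        if_neg (by rw [mem_level.1 (mem_level_of_mem_children hx hy)]; omega), parent_eq hy]
    refine ⟨g, (hf.congr hgf.symm).succ fun x hx => ?_, fun y hy => ?_⟩
    · rw [hgf (mem_below_succ.2 (Or.inr hx))]
      exact (hφ x hx).1.congr fun y hy => (hgφ hx hy).symm
    rcases mem_below_succ.1 hy with hy | hy
    · rw [hgf hy, hfpiece y hy]
    · rw [hgφ (parent_mem_level hy) (mem_children_parent hy)]
      exact (hφ _ (parent_mem_level hy)).2 y (mem_children_parent hy)

end Encodes

/-- Any two trees encoded by the same template are locally isomorphic. -/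
theorem stmt9 {A T₁ T₂ : Type*} (τ : Template A) (t1 : TreeOrder T₁) (t2 : TreeOrder T₂)
    (E1 : A → Set T₁) (E2 : A → Set T₂)
    (h1 : Encodes τ t1 E1) (h2 : Encodes τ t2 E2) :
    ∀ n, ∃ f : T₁ → T₂, Set.BijOn f (t1.below n) (t2.below n) ∧
      ∀ x ∈ t1.below n, ∀ y ∈ t1.below n, (t1.le x y ↔ t2.le (f x) (f y)) := by
  intro n
  cases n with
  | zero => exact ⟨fun _ => t2.root, TreeOrder.isIsoBelow_zero _⟩
  | succ k =>
    obtain ⟨f, hf, -⟩ := h1.exists_isIsoBelow h2 k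
    exact ⟨f, hf⟩
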